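/- Let f : ℝ² → ℝ be twice continuously differentiable, let Q ⊆ ℤ², and for each j = (j₁,j₂) ∈ Q let x^{(j)} be a point of the unit cell [j₁, j₁+1] × [j₂, j₂+1]. Then Σ_{j ∈ Q} f(x^{(j)})² ≤ 4 Σ_{j ∈ Q} ∫_{[j₁,j₁+1]×[j₂,j₂+1]} ( f² + (∂₁f)² + (∂₂f)² + (∂₁∂₂f)² ) dx, where ∂₁, ∂₂ denote the partial derivatives in the two coordinates (both sides may be +∞). -/

import Mathlib

open MeasureTheory Set intervalIntegral

noncomputable section

/-- Partial derivative in the first coordinate. -/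
def pd1 (f : ℝ × ℝ → ℝ) (X : ℝ × ℝ) : ℝ := deriv (fun a => f (a, X.2)) X.1

/-- Partial derivative in the second coordinate. -/
def pd2 (f : ℝ × ℝ → ℝ) (X : ℝ × ℝ) : ℝ := deriv (fun b => f (X.1, b)) X.2

/-- The closed unit cell `[j₁, j₁+1] × [j₂, j₂+1]`. -/
def cell (j : ℤ × ℤ) : Set (ℝ × ℝ) :=
  Set.Icc ((j.1 : ℝ), (j.2 : ℝ)) ((j.1 : ℝ) + 1, (j.2 : ℝ) + 1)

lemma cs_abs {a b : ℝ} (hba : b - a ≤ 1) {h : ℝ → ℝ} (hh : Continuous h) :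
    (∫ t in Icc a b, |h t|) ^ 2 ≤ ∫ t in Icc a b, h t ^ 2 := by
  have hint : 0 ≤ ∫ t in Icc a b, h t ^ 2 :=
    setIntegral_nonneg measurableSet_Icc (fun t _ => sq_nonneg _)
  rcases le_or_gt b a with hab | hab
  · have hz : volume (Icc a b) = 0 := by rw [Real.volume_Icc]; simp [sub_nonpos.2 hab]
    rw [Measure.restrict_eq_zero.2 hz]
    simp
  set μ := volume.restrict (Icc a b) with hμ
  have hμfin : IsFiniteMeasure μ := ⟨by
    rw [Measure.restrict_apply_univ, Real.volume_Icc]; exact ENNReal.ofReal_lt_top⟩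
  have hμ1 : (μ Set.univ).toReal ≤ 1 := by
    rw [Measure.restrict_apply_univ, Real.volume_Icc, ENNReal.toReal_ofReal (by linarith)]
    exact hba
  have hconj : (2:ℝ).HolderConjugate 2 := Real.holderConjugate_iff.2 ⟨one_lt_two, by norm_num⟩
  obtain ⟨C, hC⟩ := isCompact_Icc.exists_bound_of_continuousOn (hh.continuousOn (s := Icc a b))
  have hmem : MemLp (fun t => |h t|) (ENNReal.ofReal 2) μ :=
    MemLp.mono_exponent
      (memLp_top_of_bound (hh.abs.aestronglyMeasurable.restrict) C
        ((ae_restrict_iff' measurableSet_Icc).2 (Filter.Eventually.of_forall fun t ht => by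
          simpa [abs_abs] using hC t ht))) le_top
  have hmem1 : MemLp (fun _ : ℝ => (1:ℝ)) (ENNReal.ofReal 2) μ := memLp_const 1
  have key := integral_mul_le_Lp_mul_Lq_of_nonneg (μ := μ) hconj
    (Filter.Eventually.of_forall fun t => abs_nonneg _)
    (Filter.Eventually.of_forall fun t => zero_le_one) hmem hmem1
  simp only [mul_one, one_pow] at key
  have keq : (∫ t, |h t| ^ (2:ℝ) ∂μ) = ∫ t, h t ^ 2 ∂μ := by
    have h2 : ∀ y : ℝ, y ^ (2:ℝ) = y ^ 2 := fun y => by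
      rw [show ((2:ℝ)) = ((2:ℕ):ℝ) by norm_num, Real.rpow_natCast]
    refine integral_congr_ae (Filter.Eventually.of_forall fun t => ?_)
    simp only [h2, sq_abs]
  have k1 : (∫ t, (1:ℝ) ^ (2:ℝ) ∂μ) = (μ Set.univ).toReal := by
    simp [Measure.real]
  rw [keq, k1] at key
  set M := ∫ t, |h t| ∂μ with hM
  set S := ∫ t, h t ^ 2 ∂μ with hS
  have hMnn : 0 ≤ M := integral_nonneg fun t => abs_nonneg _
  have hs2 : ((S : ℝ) ^ (1/2:ℝ)) ^ 2 = S := by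
    rw [← Real.rpow_natCast (S ^ (1/2:ℝ)) 2, ← Real.rpow_mul hint]; norm_num
  have hu2 : (((μ Set.univ).toReal) ^ (1/2:ℝ)) ^ 2 = (μ Set.univ).toReal := by
    rw [← Real.rpow_natCast _ 2, ← Real.rpow_mul ENNReal.toReal_nonneg]; norm_num
  nlinarith [Real.rpow_nonneg hint (1/2:ℝ), Real.rpow_nonneg (ENNReal.toReal_nonneg (a := μ Set.univ)) (1/2:ℝ), sq_nonneg (S ^ (1/2:ℝ) - (μ Set.univ).toReal ^ (1/2:ℝ))]


/-- Squared interval integral bounded by the integral of the square over a unit interval. -/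
lemma sq_intervalIntegral_le {a : ℝ} {h : ℝ → ℝ} (hh : Continuous h) {u v : ℝ}
    (hu : u ∈ Icc a (a + 1)) (hv : v ∈ Icc a (a + 1)) :
    (∫ t in u..v, h t) ^ 2 ≤ ∫ t in Icc a (a + 1), h t ^ 2 := by
  have hsub : Set.uIoc u v ⊆ Icc a (a + 1) :=
    (uIoc_subset_uIcc).trans (uIcc_subset_Icc hu hv)
  have habs : |∫ t in u..v, h t| ≤ ∫ t in Icc a (a + 1), |h t| := by
    have h1 : ‖∫ t in u..v, h t‖ ≤ ∫ t in Set.uIoc u v, ‖h t‖ :=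
      intervalIntegral.norm_integral_le_integral_norm_uIoc
    simp only [Real.norm_eq_abs] at h1
    refine h1.trans ?_
    refine setIntegral_mono_set
      (hh.abs.continuousOn.integrableOn_compact isCompact_Icc) ?_ ?_
    · exact Filter.Eventually.of_forall fun t => abs_nonneg _
    · exact HasSubset.Subset.eventuallyLE hsub
  calc (∫ t in u..v, h t) ^ 2 = |∫ t in u..v, h t| ^ 2 := (sq_abs _).symm
    _ ≤ (∫ t in Icc a (a + 1), |h t|) ^ 2 := by
        have h0 : (0:ℝ) ≤ ∫ t in Icc a (a+1), |h t| :=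
          setIntegral_nonneg measurableSet_Icc fun t _ => abs_nonneg _
        exact pow_le_pow_left₀ (abs_nonneg _) habs 2
    _ ≤ ∫ t in Icc a (a + 1), h t ^ 2 := cs_abs (by linarith) hh



section ftc
variable {f : ℝ × ℝ → ℝ}

lemma hasDerivAt_slice1 (hf : Differentiable ℝ f) (X : ℝ × ℝ) :
    HasDerivAt (fun a => f (a, X.2)) (fderiv ℝ f X ((1:ℝ), (0:ℝ))) X.1 := by
  have h1 : HasDerivAt (fun a : ℝ => (a, X.2)) ((1:ℝ), (0:ℝ)) X.1 :=
    (hasDerivAt_id X.1).prodMk (hasDerivAt_const X.1 X.2)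
  exact ((hf X).hasFDerivAt.comp_hasDerivAt X.1 (by simpa using h1))

lemma hasDerivAt_slice2 (hf : Differentiable ℝ f) (X : ℝ × ℝ) :
    HasDerivAt (fun b => f (X.1, b)) (fderiv ℝ f X ((0:ℝ), (1:ℝ))) X.2 := by
  have h1 : HasDerivAt (fun b : ℝ => (X.1, b)) ((0:ℝ), (1:ℝ)) X.2 :=
    (hasDerivAt_const X.2 X.1).prodMk (hasDerivAt_id X.2)
  exact ((hf X).hasFDerivAt.comp_hasDerivAt X.2 (by simpa using h1))

lemma pd1_eq (hf : Differentiable ℝ f) (X : ℝ × ℝ) :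
    pd1 f X = fderiv ℝ f X ((1:ℝ), (0:ℝ)) := (hasDerivAt_slice1 hf X).deriv

lemma pd2_eq (hf : Differentiable ℝ f) (X : ℝ × ℝ) :
    pd2 f X = fderiv ℝ f X ((0:ℝ), (1:ℝ)) := (hasDerivAt_slice2 hf X).deriv

lemma pd1_cont (hf : ContDiff ℝ 1 f) : Continuous (pd1 f) := by
  have hc : Continuous fun X => fderiv ℝ f X ((1:ℝ), (0:ℝ)) :=
    (ContinuousLinearMap.apply ℝ ℝ ((1:ℝ), (0:ℝ))).continuous.comp
      (hf.continuous_fderiv one_ne_zero)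
  have he : pd1 f = fun X => fderiv ℝ f X ((1:ℝ), (0:ℝ)) :=
    funext fun X => pd1_eq (hf.differentiable one_ne_zero) X
  rw [he]; exact hc

lemma pd2_cont (hf : ContDiff ℝ 1 f) : Continuous (pd2 f) := by
  have hc : Continuous fun X => fderiv ℝ f X ((0:ℝ), (1:ℝ)) :=
    (ContinuousLinearMap.apply ℝ ℝ ((0:ℝ), (1:ℝ))).continuous.comp
      (hf.continuous_fderiv one_ne_zero)
  have he : pd2 f = fun X => fderiv ℝ f X ((0:ℝ), (1:ℝ)) :=
    funext fun X => pd2_eq (hf.differentiable one_ne_zero) X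
  rw [he]; exact hc

lemma pd2_contDiff (hf : ContDiff ℝ 2 f) : ContDiff ℝ 1 (pd2 f) := by
  have he : pd2 f = fun X => fderiv ℝ f X ((0:ℝ), (1:ℝ)) :=
    funext fun X => pd2_eq (hf.differentiable two_ne_zero) X
  rw [he]
  exact (ContinuousLinearMap.apply ℝ ℝ ((0:ℝ), (1:ℝ))).contDiff.comp
    (hf.fderiv_right (by norm_num))

/-- FTC in the first variable. -/
lemma ftc1 (hd : Differentiable ℝ f) (hc : Continuous (pd1 f)) (u v y : ℝ) :
    (∫ t in u..v, pd1 f (t, y)) = f (v, y) - f (u, y) := by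
  refine integral_eq_sub_of_hasDerivAt (f := fun a => f (a, y)) (fun t _ => ?_) ?_
  · rw [pd1_eq hd (t, y)]; exact hasDerivAt_slice1 hd (t, y)
  · exact (hc.comp (continuous_id.prodMk continuous_const)).intervalIntegrable u v

/-- FTC in the second variable. -/
lemma ftc2 (hd : Differentiable ℝ f) (hc : Continuous (pd2 f)) (u v w : ℝ) :
    (∫ s in u..v, pd2 f (w, s)) = f (w, v) - f (w, u) := by
  refine integral_eq_sub_of_hasDerivAt (f := fun b => f (w, b)) (fun s _ => ?_) ?_
  · rw [pd2_eq hd (w, s)]; exact hasDerivAt_slice2 hd (w, s)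
  · exact (hc.comp (continuous_const.prodMk continuous_id)).intervalIntegrable u v

/-- Decomposition `f p = f x + A + B + C`. -/
lemma decomp (hf : ContDiff ℝ 2 f) (p x : ℝ × ℝ) :
    f p = f x + (∫ t in x.1..p.1, pd1 f (t, x.2))
      + (∫ s in x.2..p.2, pd2 f (x.1, s))
      + (∫ s in x.2..p.2, ∫ t in x.1..p.1, pd1 (pd2 f) (t, s)) := by
  have hd : Differentiable ℝ f := hf.differentiable two_ne_zero
  have hc1 : Continuous (pd1 f) := pd1_cont (hf.of_le one_le_two)
  have hc2 : Continuous (pd2 f) := pd2_cont (hf.of_le one_le_two)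
  have hcd : ContDiff ℝ 1 (pd2 f) := pd2_contDiff hf
  have hg : Continuous (pd1 (pd2 f)) := pd1_cont hcd
  have h1 : (∫ t in x.1..p.1, pd1 f (t, x.2)) = f (p.1, x.2) - f (x.1, x.2) :=
    ftc1 hd hc1 _ _ _
  have h2 : (∫ s in x.2..p.2, pd2 f (p.1, s)) = f (p.1, p.2) - f (p.1, x.2) :=
    ftc2 hd hc2 _ _ _
  have h3 : ∀ s, pd2 f (p.1, s) = pd2 f (x.1, s) + ∫ t in x.1..p.1, pd1 (pd2 f) (t, s) :=
    fun s => by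
      rw [ftc1 (hcd.differentiable one_ne_zero) hg x.1 p.1 s]; ring
  have cB : Continuous fun s => pd2 f (x.1, s) :=
    hc2.comp (continuous_const.prodMk continuous_id)
  have cC : Continuous fun s => ∫ t in x.1..p.1, pd1 (pd2 f) (t, s) := by
    have : Continuous (Function.uncurry fun (s t : ℝ) => pd1 (pd2 f) (t, s)) :=
      hg.comp (continuous_snd.prodMk continuous_fst)
    exact intervalIntegral.continuous_parametric_intervalIntegral_of_continuous' this x.1 p.1
  have h4 : (∫ s in x.2..p.2, pd2 f (p.1, s))
      = (∫ s in x.2..p.2, pd2 f (x.1, s))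
        + ∫ s in x.2..p.2, ∫ t in x.1..p.1, pd1 (pd2 f) (t, s) := by
    rw [← intervalIntegral.integral_add (cB.intervalIntegrable _ _) (cC.intervalIntegrable _ _)]
    exact intervalIntegral.integral_congr fun s _ => h3 s
  have hp : f p = f (p.1, p.2) := by simp
  have hx : f x = f (x.1, x.2) := by simp
  have h5 : (∫ s in x.2..p.2, pd2 f (x.1, s))
      + (∫ s in x.2..p.2, ∫ t in x.1..p.1, pd1 (pd2 f) (t, s))
      = f (p.1, p.2) - f (p.1, x.2) := by rw [← h4]; exact h2
  rw [h1, hp, hx]; linarith [h5]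
end ftc


lemma core {f : ℝ × ℝ → ℝ} (hf : ContDiff ℝ 2 f) (a1 a2 : ℝ) {p : ℝ × ℝ}
    (hp : p ∈ Icc a1 (a1 + 1) ×ˢ Icc a2 (a2 + 1)) :
    f p ^ 2 ≤ 4 * ∫ X in Icc a1 (a1 + 1) ×ˢ Icc a2 (a2 + 1),
      (f X ^ 2 + pd1 f X ^ 2 + pd2 f X ^ 2 + pd1 (pd2 f) X ^ 2) := by
  set I1 : Set ℝ := Icc a1 (a1 + 1) with hI1
  set I2 : Set ℝ := Icc a2 (a2 + 1) with hI2
  set S : Set (ℝ × ℝ) := I1 ×ˢ I2 with hSdef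
  have hd : Differentiable ℝ f := hf.differentiable two_ne_zero
  have hc0 : Continuous f := hf.continuous
  have hc1 : Continuous (pd1 f) := pd1_cont (hf.of_le one_le_two)
  have hc2 : Continuous (pd2 f) := pd2_cont (hf.of_le one_le_two)
  have hcd : ContDiff ℝ 1 (pd2 f) := pd2_contDiff hf
  have hg : Continuous (pd1 (pd2 f)) := pd1_cont hcd
  have hScpt : IsCompact S := isCompact_Icc.prod isCompact_Icc
  have hSmeas : MeasurableSet S := (measurableSet_Icc.prod measurableSet_Icc)
  have hI1vol : volume I1 = 1 := by rw [hI1, Real.volume_Icc]; norm_num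
  have hI2vol : volume I2 = 1 := by rw [hI2, Real.volume_Icc]; norm_num
  have hSvol : volume S = 1 := by
    rw [hSdef, Measure.volume_eq_prod, Measure.prod_prod, hI1vol, hI2vol, one_mul]
  -- integrability of continuous functions on S
  have intS : ∀ F : ℝ × ℝ → ℝ, Continuous F → IntegrableOn F S volume :=
    fun F hF => hF.continuousOn.integrableOn_compact hScpt
  -- Fubini helpers
  have fub : ∀ F : ℝ × ℝ → ℝ, Continuous F →
      (∫ X in S, F X) = ∫ t in I1, ∫ s in I2, F (t, s) := by
    intro F hF
    have hint : IntegrableOn F (I1 ×ˢ I2) (volume.prod volume) := by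
      rw [← Measure.volume_eq_prod]; exact intS F hF
    have := setIntegral_prod F hint
    rwa [← Measure.volume_eq_prod] at this
  have fub_symm : ∀ F : ℝ × ℝ → ℝ, Continuous F →
      (∫ X in S, F X) = ∫ s in I2, ∫ t in I1, F (t, s) := by
    intro F hF
    have hint : Integrable F (((volume : Measure ℝ).restrict I1).prod
        ((volume : Measure ℝ).restrict I2)) := by
      rw [Measure.prod_restrict, ← Measure.volume_eq_prod]; exact intS F hF
    have h2 := integral_prod_symm F hint
    rw [Measure.prod_restrict, ← Measure.volume_eq_prod] at h2
    exact h2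
  -- constants integrate to themselves
  have int_const1 : ∀ c : ℝ, (∫ _t in I1, c) = c := by
    intro c; rw [setIntegral_const, Measure.real, hI1vol]; simp
  have int_const2 : ∀ c : ℝ, (∫ _s in I2, c) = c := by
    intro c; rw [setIntegral_const, Measure.real, hI2vol]; simp
  have int_constS : ∀ c : ℝ, (∫ _X in S, c) = c := by
    intro c; rw [setIntegral_const, Measure.real, hSvol]; simp
  -- the auxiliary functions
  set α : ℝ → ℝ := fun y => ∫ t in I1, pd1 f (t, y) ^ 2 with hα
  set β : ℝ → ℝ := fun u => ∫ s in I2, pd2 f (u, s) ^ 2 with hβ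
  set γ : ℝ := ∫ X in S, pd1 (pd2 f) X ^ 2 with hγ
  have hαcont : Continuous α :=
    continuous_parametric_integral_of_continuous
      (f := fun y t => pd1 f (t, y) ^ 2)
      (by exact ((hc1.comp (continuous_snd.prodMk continuous_fst)).pow 2)) isCompact_Icc
  have hβcont : Continuous β :=
    continuous_parametric_integral_of_continuous
      (f := fun u s => pd2 f (u, s) ^ 2)
      (by exact ((hc2.comp (continuous_fst.prodMk continuous_snd)).pow 2)) isCompact_Icc
  obtain ⟨hp1, hp2⟩ := hp
  -- the pointwise bound
  have main : ∀ x ∈ S, f p ^ 2 ≤ 4 * (f x ^ 2 + α x.2 + β x.1 + γ) := by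
    rintro x ⟨hx1, hx2⟩
    set A := ∫ t in x.1..p.1, pd1 f (t, x.2) with hA
    set B := ∫ s in x.2..p.2, pd2 f (x.1, s) with hB
    set C := ∫ s in x.2..p.2, ∫ t in x.1..p.1, pd1 (pd2 f) (t, s) with hC
    have hAb : A ^ 2 ≤ α x.2 :=
      sq_intervalIntegral_le (hc1.comp (continuous_id.prodMk continuous_const)) hx1 hp1
    have hBb : B ^ 2 ≤ β x.1 :=
      sq_intervalIntegral_le (hc2.comp (continuous_const.prodMk continuous_id)) hx2 hp2
    have cW : Continuous fun s => ∫ t in x.1..p.1, pd1 (pd2 f) (t, s) := by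
      have : Continuous (Function.uncurry fun (s t : ℝ) => pd1 (pd2 f) (t, s)) :=
        hg.comp (continuous_snd.prodMk continuous_fst)
      exact intervalIntegral.continuous_parametric_intervalIntegral_of_continuous' this x.1 p.1
    have hCb : C ^ 2 ≤ γ := by
      have step1 : C ^ 2 ≤ ∫ s in I2, (∫ t in x.1..p.1, pd1 (pd2 f) (t, s)) ^ 2 :=
        sq_intervalIntegral_le cW hx2 hp2
      have step2 : (∫ s in I2, (∫ t in x.1..p.1, pd1 (pd2 f) (t, s)) ^ 2)
          ≤ ∫ s in I2, ∫ t in I1, pd1 (pd2 f) (t, s) ^ 2 := by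
        refine setIntegral_mono_on ((cW.pow 2).continuousOn.integrableOn_compact isCompact_Icc)
          (Continuous.continuousOn ?_ |>.integrableOn_compact isCompact_Icc)
          measurableSet_Icc (fun s _ => ?_)
        · exact continuous_parametric_integral_of_continuous
            (f := fun s t => pd1 (pd2 f) (t, s) ^ 2)
            (by exact ((hg.comp (continuous_snd.prodMk continuous_fst)).pow 2)) isCompact_Icc
        · exact sq_intervalIntegral_le (hg.comp (continuous_id.prodMk continuous_const)) hx1 hp1
      have step3 : (∫ s in I2, ∫ t in I1, pd1 (pd2 f) (t, s) ^ 2) = γ :=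
        (fub_symm _ (hg.pow 2)).symm
      calc C ^ 2 ≤ _ := step1
        _ ≤ _ := step2
        _ = γ := step3
    have hdec := decomp hf p x
    have hsq : f p ^ 2 ≤ 4 * (f x ^ 2 + A ^ 2 + B ^ 2 + C ^ 2) := by
      rw [hdec]; nlinarith [sq_nonneg (f x - A), sq_nonneg (f x - B), sq_nonneg (f x - C),
        sq_nonneg (A - B), sq_nonneg (A - C), sq_nonneg (B - C)]
    linarith
  -- integrate the bound over S
  have hRHScont : Continuous fun x : ℝ × ℝ => 4 * (f x ^ 2 + α x.2 + β x.1 + γ) :=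
    (continuous_const.mul ((((hc0.pow 2).add (hαcont.comp continuous_snd)).add
      (hβcont.comp continuous_fst)).add continuous_const))
  have hineq : f p ^ 2 ≤ ∫ x in S, 4 * (f x ^ 2 + α x.2 + β x.1 + γ) := by
    have h0 : f p ^ 2 = ∫ _x in S, (f p ^ 2 : ℝ) := (int_constS _).symm
    rw [h0]
    refine setIntegral_mono_on ?_ (intS _ hRHScont) hSmeas main
    exact integrableOn_const (by rw [hSvol]; exact ENNReal.one_ne_top)
  -- compute the right-hand side
  have e1 : (∫ x in S, α x.2) = ∫ X in S, pd1 f X ^ 2 := by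
    rw [fub (fun x => α x.2) (hαcont.comp continuous_snd)]
    have : ∀ t : ℝ, (∫ s in I2, α s) = (∫ s in I2, α s) := fun _ => rfl
    rw [int_const1 (∫ s in I2, α s)]
    rw [fub_symm (fun X => pd1 f X ^ 2) (hc1.pow 2)]
  have e2 : (∫ x in S, β x.1) = ∫ X in S, pd2 f X ^ 2 := by
    rw [fub (fun x => β x.1) (hβcont.comp continuous_fst)]
    have h : ∀ t : ℝ, (∫ _s in I2, β t) = β t := fun t => int_const2 (β t)
    simp_rw [h]
    rw [fub (fun X => pd2 f X ^ 2) (hc2.pow 2)]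
  have e3 : (∫ x in S, (γ : ℝ)) = ∫ X in S, pd1 (pd2 f) X ^ 2 := int_constS γ
  have esum : (∫ x in S, 4 * (f x ^ 2 + α x.2 + β x.1 + γ))
      = 4 * ∫ X in S, (f X ^ 2 + pd1 f X ^ 2 + pd2 f X ^ 2 + pd1 (pd2 f) X ^ 2) := by
    rw [MeasureTheory.integral_const_mul]
    congr 1
    have i1 : IntegrableOn (fun X : ℝ × ℝ => f X ^ 2) S volume := intS _ (hc0.pow 2)
    have i2 : IntegrableOn (fun x : ℝ × ℝ => α x.2) S volume :=
      intS _ (hαcont.comp continuous_snd)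
    have i3 : IntegrableOn (fun x : ℝ × ℝ => β x.1) S volume :=
      intS _ (hβcont.comp continuous_fst)
    have i4 : IntegrableOn (fun _x : ℝ × ℝ => (γ : ℝ)) S volume :=
      integrableOn_const (by rw [hSvol]; exact ENNReal.one_ne_top)
    have i12 : IntegrableOn (fun x : ℝ × ℝ => f x ^ 2 + α x.2) S volume := by
      exact i1.add i2
    have i123 : IntegrableOn (fun x : ℝ × ℝ => f x ^ 2 + α x.2 + β x.1) S volume := by
      exact i12.add i3
    have j2 : IntegrableOn (fun X : ℝ × ℝ => pd1 f X ^ 2) S volume := intS _ (hc1.pow 2)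
    have j3 : IntegrableOn (fun X : ℝ × ℝ => pd2 f X ^ 2) S volume := intS _ (hc2.pow 2)
    have j4 : IntegrableOn (fun X : ℝ × ℝ => pd1 (pd2 f) X ^ 2) S volume := intS _ (hg.pow 2)
    have j12 : IntegrableOn (fun X : ℝ × ℝ => f X ^ 2 + pd1 f X ^ 2) S volume := by
      exact i1.add j2
    have j123 : IntegrableOn (fun X : ℝ × ℝ => f X ^ 2 + pd1 f X ^ 2 + pd2 f X ^ 2) S volume := by
      exact j12.add j3
    have L : (∫ x in S, (f x ^ 2 + α x.2 + β x.1 + γ))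
        = (∫ x in S, f x ^ 2) + (∫ x in S, α x.2) + (∫ x in S, β x.1) + ∫ _x in S, (γ:ℝ) := by
      rw [show (∫ x in S, (f x ^ 2 + α x.2 + β x.1 + γ))
          = (∫ x in S, (f x ^ 2 + α x.2 + β x.1)) + ∫ _x in S, (γ:ℝ) from integral_add i123 i4,
        show (∫ x in S, (f x ^ 2 + α x.2 + β x.1))
          = (∫ x in S, (f x ^ 2 + α x.2)) + ∫ x in S, β x.1 from integral_add i12 i3,
        show (∫ x in S, (f x ^ 2 + α x.2))
          = (∫ x in S, f x ^ 2) + ∫ x in S, α x.2 from integral_add i1 i2]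
    have R : (∫ X in S, (f X ^ 2 + pd1 f X ^ 2 + pd2 f X ^ 2 + pd1 (pd2 f) X ^ 2))
        = (∫ X in S, f X ^ 2) + (∫ X in S, pd1 f X ^ 2) + (∫ X in S, pd2 f X ^ 2)
          + ∫ X in S, pd1 (pd2 f) X ^ 2 := by
      rw [show (∫ X in S, (f X ^ 2 + pd1 f X ^ 2 + pd2 f X ^ 2 + pd1 (pd2 f) X ^ 2))
          = (∫ X in S, (f X ^ 2 + pd1 f X ^ 2 + pd2 f X ^ 2)) + ∫ X in S, pd1 (pd2 f) X ^ 2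
          from integral_add j123 j4,
        show (∫ X in S, (f X ^ 2 + pd1 f X ^ 2 + pd2 f X ^ 2))
          = (∫ X in S, (f X ^ 2 + pd1 f X ^ 2)) + ∫ X in S, pd2 f X ^ 2 from integral_add j12 j3,
        show (∫ X in S, (f X ^ 2 + pd1 f X ^ 2))
          = (∫ X in S, f X ^ 2) + ∫ X in S, pd1 f X ^ 2 from integral_add i1 j2]
    rw [L, R, e1, e2, e3]
  rw [← esum]
  exact hineq


lemma cell_eq (j : ℤ × ℤ) :
    cell j = Icc (j.1 : ℝ) ((j.1 : ℝ) + 1) ×ˢ Icc (j.2 : ℝ) ((j.2 : ℝ) + 1) := by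
  rw [cell, Set.Icc_prod_eq]

lemma cell_bound {f : ℝ × ℝ → ℝ} (hf : ContDiff ℝ 2 f) (j : ℤ × ℤ) {p : ℝ × ℝ}
    (hp : p ∈ cell j) :
    ENNReal.ofReal (f p ^ 2) ≤ 4 * ∫⁻ X in cell j,
      ENNReal.ofReal (f X ^ 2 + pd1 f X ^ 2 + pd2 f X ^ 2 + pd1 (pd2 f) X ^ 2) := by
  rw [cell_eq] at hp ⊢
  have hreal := core hf (j.1 : ℝ) (j.2 : ℝ) hp
  set S := Icc (j.1 : ℝ) ((j.1 : ℝ) + 1) ×ˢ Icc (j.2 : ℝ) ((j.2 : ℝ) + 1) with hS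
  set G : ℝ × ℝ → ℝ := fun X => f X ^ 2 + pd1 f X ^ 2 + pd2 f X ^ 2 + pd1 (pd2 f) X ^ 2
    with hG
  have hGcont : Continuous G := by
    have hc1 : Continuous (pd1 f) := pd1_cont (hf.of_le one_le_two)
    have hc2 : Continuous (pd2 f) := pd2_cont (hf.of_le one_le_two)
    have hg : Continuous (pd1 (pd2 f)) := pd1_cont (pd2_contDiff hf)
    exact (((hf.continuous.pow 2).add (hc1.pow 2)).add (hc2.pow 2)).add (hg.pow 2)
  have hGint : IntegrableOn G S volume :=
    hGcont.continuousOn.integrableOn_compact (isCompact_Icc.prod isCompact_Icc)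
  have hGnn : (0:ℝ×ℝ→ℝ) ≤ᵐ[volume.restrict S] G :=
    Filter.Eventually.of_forall fun X => by positivity
  have heq : ENNReal.ofReal (∫ X in S, G X) = ∫⁻ X in S, ENNReal.ofReal (G X) :=
    ofReal_integral_eq_lintegral_ofReal hGint hGnn
  calc ENNReal.ofReal (f p ^ 2) ≤ ENNReal.ofReal (4 * ∫ X in S, G X) :=
        ENNReal.ofReal_le_ofReal hreal
    _ = ENNReal.ofReal 4 * ENNReal.ofReal (∫ X in S, G X) :=
        ENNReal.ofReal_mul (by norm_num)
    _ = 4 * ∫⁻ X in S, ENNReal.ofReal (G X) := by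
        rw [heq]; norm_num

theorem stmt16 (f : ℝ × ℝ → ℝ) (hf : ContDiff ℝ 2 f)
    (Q : Set (ℤ × ℤ)) (x : ℤ × ℤ → ℝ × ℝ)
    (hx : ∀ j ∈ Q, x j ∈ cell j) :
    ∑' j : Q, ENNReal.ofReal ((f (x j)) ^ 2) ≤
      4 * ∑' j : Q, ∫⁻ X in cell j,
        ENNReal.ofReal ((f X) ^ 2 + (pd1 f X) ^ 2 + (pd2 f X) ^ 2 + (pd1 (pd2 f) X) ^ 2) := by
  rw [← ENNReal.tsum_mul_left]
  exact ENNReal.tsum_le_tsum fun j => cell_bound hf j.1 (hx j.1 j.2)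

end
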